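/- arXiv:1002.0974 — 9 statements merged into one kernel-verified Lean document; each statement's English description precedes it below -/
import Mathlib

section
/- There is no non-trivial CMV-algebra whose underlying MV-order is total: in any non-trivial CMV-algebra, there exist elements x, y with neither x ≤ y nor y ≤ x. -/
class CMV (A : Type*) where
  add : A → A → A
  neg : A → A
  zero : A
  dia : A → A → A
  i : A
  add_assoc : ∀ x y z : A, add (add x y) z = add x (add y z)
  add_comm : ∀ x y : A, add x y = add y x
  add_zero : ∀ x : A, add x zero = x
  neg_neg : ∀ x : A, neg (neg x) = x
  add_top : ∀ x : A, add x (neg zero) = neg zero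
  luk : ∀ x y : A, add (neg (add (neg x) y)) y = add (neg (add (neg y) x)) x
  dia_assoc : ∀ x y z : A, dia (dia x y) z = dia x (dia y z)
  dia_i : ∀ x : A, dia x i = x
  i_dia : ∀ x : A, dia i x = x
  add_dia : ∀ x y z : A, dia (add y z) x = add (dia y x) (dia z x)
  neg_dia : ∀ x y : A, dia (neg x) y = neg (dia x y)
  zero_dia : ∀ x : A, dia zero x = zero

namespace CMV
variable {A : Type*} [CMV A]

/-- The top element `1 := 0*`. -/
def one : A := neg zero

/-- The MV-order: `x ≤ y` iff `x* ⊕ y = 1`. -/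
def le (x y : A) : Prop := add (neg x) y = one

/-- The derived operation `x ⊙ y = (x* ⊕ y*)*`. -/
def mul (x y : A) : A := neg (add (neg x) (neg y))

end CMV

/-- No non-trivial CMV-algebra is totally ordered. -/
theorem stmt8 {A : Type*} [CMV A] (h : (CMV.zero : A) ≠ CMV.one) :
    ∃ x y : A, ¬ CMV.le x y ∧ ¬ CMV.le y x := by
  refine ⟨CMV.i, CMV.neg CMV.i, ?_, ?_⟩
  · intro hle
    apply h
    unfold CMV.le at hle
    have := congrArg (fun t => CMV.dia t (CMV.one : A)) hle
    simp only [CMV.add_dia, CMV.neg_dia, CMV.i_dia] at this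
    rw [show (CMV.neg CMV.one : A) = CMV.zero by
      simp [CMV.one, CMV.neg_neg]] at this
    rw [CMV.add_zero] at this
    rw [show (CMV.dia CMV.one CMV.one : A) = CMV.one by
      simp [CMV.one, CMV.neg_dia, CMV.zero_dia]] at this
    exact this
  · intro hle
    apply h
    unfold CMV.le at hle
    rw [CMV.neg_neg] at hle
    have := congrArg (fun t => CMV.dia t (CMV.zero : A)) hle
    simp only [CMV.add_dia, CMV.i_dia] at this
    rw [CMV.add_zero] at this
    rw [show (CMV.dia CMV.one CMV.zero : A) = CMV.one by
      simp [CMV.one, CMV.neg_dia, CMV.zero_dia]] at this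
    exact this
end

section
/- Every non-trivial CMV-algebra has at least four elements. -/
/-- Every non-trivial CMV-algebra has at least four elements. -/
theorem stmt9 {A : Type*} [CMV A] (h : (CMV.zero : A) ≠ CMV.one) :
    ∃ a b c d : A, a ≠ b ∧ a ≠ c ∧ a ≠ d ∧ b ≠ c ∧ b ≠ d ∧ c ≠ d := by
  classical
  -- key facts
  have hone_dia : ∀ x : A, CMV.dia CMV.one x = (CMV.one : A) := by
    intro x
    show CMV.dia (CMV.neg CMV.zero) x = CMV.one
    rw [CMV.neg_dia, CMV.zero_dia]
    rfl
  have hi_ne_one : (CMV.i : A) ≠ CMV.one := by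
    intro he
    apply h
    have := CMV.i_dia (CMV.zero : A)
    rw [he, hone_dia] at this
    exact this.symm
  have hi_ne_zero : (CMV.i : A) ≠ CMV.zero := by
    intro he
    apply h
    have := CMV.i_dia (CMV.one : A)
    rw [he, CMV.zero_dia] at this
    exact this
  have hneg_i : (CMV.neg CMV.i : A) ≠ CMV.i := by
    intro he
    apply h
    have h2 : CMV.dia (CMV.neg CMV.i) (CMV.zero : A) = CMV.neg CMV.zero := by
      rw [CMV.neg_dia, CMV.i_dia]
    rw [he, CMV.i_dia] at h2
    exact h2
    
  refine ⟨CMV.zero, CMV.one, CMV.i, CMV.neg CMV.i, h, fun he => hi_ne_zero he.symm, ?_, fun he => hi_ne_one he.symm, ?_, fun he => hneg_i he.symm⟩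
  · intro he
    apply hi_ne_one
    have := congrArg CMV.neg he
    rw [CMV.neg_neg] at this
    rw [← this]
    rfl
  · intro he
    apply hi_ne_zero
    have := congrArg CMV.neg he.symm
    rw [CMV.neg_neg] at this
    rw [this]
    show CMV.neg (CMV.neg CMV.zero) = CMV.zero
    rw [CMV.neg_neg]
end

section
/- The MV-reduct of a non-trivial CMV-algebra is not simple, i.e., it has a proper nonzero MV-ideal or equivalently a congruence other than the identity and the full relation. (In particular, since simple MV-algebras are totally ordered and no non-trivial CMV-algebra is totally ordered, the MV-reduct cannot be simple.) -/
namespace CMV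
variable {A : Type*} [CMV A]
/-- An MV-ideal: nonempty, downward closed, closed under `⊕`. -/
def MVIdeal (I : Set A) : Prop :=
  I.Nonempty ∧ (∀ x ∈ I, ∀ y : A, le y x → y ∈ I) ∧ (∀ x ∈ I, ∀ y ∈ I, add x y ∈ I)
end CMV

section Aux
variable {A : Type*} [CMV A]

/-- `1 ⋄ 0 = 1` : the map `x ↦ x ⋄ 0` fixes the top element. -/
lemma CMV.one_dia_zero : CMV.dia (CMV.one : A) CMV.zero = CMV.one := by
  show CMV.dia (CMV.neg CMV.zero) CMV.zero = CMV.neg CMV.zero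
  rw [CMV.neg_dia, CMV.zero_dia]

/-- `i ≠ 0` in a non-trivial CMV-algebra. -/
lemma CMV.i_ne_zero (h : (CMV.zero : A) ≠ CMV.one) : (CMV.i : A) ≠ CMV.zero := by
  intro hi
  apply h
  have := CMV.i_dia (CMV.one : A)
  rw [hi, CMV.zero_dia] at this
  exact this

end Aux

/-- The MV-reduct of a non-trivial CMV-algebra is not simple: it has an
MV-ideal different from `{0}` and the whole algebra. -/
theorem stmt10 {A : Type*} [CMV A] (h : (CMV.zero : A) ≠ CMV.one) :
    ∃ I : Set A, CMV.MVIdeal I ∧ I ≠ {CMV.zero} ∧ I ≠ Set.univ := by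
  refine ⟨{x : A | CMV.dia x CMV.zero = CMV.zero}, ⟨⟨CMV.zero, CMV.zero_dia _⟩, ?_, ?_⟩, ?_, ?_⟩
  · -- downward closed
    intro x hx y hyx
    have hx' : CMV.dia x CMV.zero = CMV.zero := hx
    have hle : CMV.add (CMV.neg y) x = CMV.one := hyx
    have := congrArg (fun z => CMV.dia z CMV.zero) hle
    simp only [CMV.add_dia, CMV.neg_dia, hx', CMV.add_zero, CMV.one_dia_zero] at this
    -- this : neg (dia y zero) = one = neg zero
    have h2 : CMV.neg (CMV.dia y CMV.zero) = CMV.neg CMV.zero := this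
    have := congrArg CMV.neg h2
    rwa [CMV.neg_neg, CMV.neg_neg] at this
  · -- closed under add
    intro x hx y hy
    show CMV.dia (CMV.add x y) CMV.zero = CMV.zero
    rw [CMV.add_dia, (hx : CMV.dia x CMV.zero = CMV.zero),
      (hy : CMV.dia y CMV.zero = CMV.zero), CMV.add_zero]
  · -- not {0}: contains i
    intro heq
    have hi : (CMV.i : A) ∈ {x : A | CMV.dia x CMV.zero = CMV.zero} := CMV.i_dia CMV.zero
    rw [heq] at hi
    exact CMV.i_ne_zero h hi
  · -- not univ: does not contain 1
    intro heq
    have h1 : (CMV.one : A) ∈ {x : A | CMV.dia x CMV.zero = CMV.zero} := by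
      rw [heq]; trivial
    have : CMV.dia (CMV.one : A) CMV.zero = CMV.zero := h1
    rw [CMV.one_dia_zero] at this
    exact h this.symm
end

section
/- In a non-trivial CMV-algebra, the identity element i does not belong to the radical of the MV-reduct; i.e., i is neither 0 nor an infinitesimal (there is n ∈ ℕ with not (n·i ≤ i*)). Similarly i* is not in the radical. Consequently, the MV-reduct of a non-trivial CMV-algebra is not perfect. -/
namespace CMV
variable {A : Type*} [CMV A]
/-- `n·a = a ⊕ ⋯ ⊕ a` (`n` times). -/
def nsmul : ℕ → A → A
  | 0, _ => zero
  | n + 1, a => add (nsmul n a) a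

/-- The radical: `0` together with the infinitesimals. -/
def Rad : Set A :=
  {a | a = zero ∨ (a ≠ zero ∧ ∀ n : ℕ, le (nsmul n a) (neg a))}
end CMV

namespace CMV
variable {A : Type*} [CMV A]

lemma one_dia (x : A) : dia one x = one := by
  unfold one; rw [neg_dia, zero_dia]

lemma dia_mono {x y : A} (hxy : le x y) (z : A) : le (dia x z) (dia y z) := by
  unfold le at *
  have h2 := add_dia z (neg x) y
  rw [hxy, one_dia, neg_dia] at h2
  exact h2.symm

lemma not_one_le_zero (h : (zero : A) ≠ one) : ¬ le (one : A) zero := by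
  intro hle
  unfold le one at hle
  rw [neg_neg, add_comm, add_zero] at hle
  exact h hle

lemma nsmul_one (a : A) : nsmul 1 a = a := by
  show add (nsmul 0 a) a = a
  show add zero a = a
  rw [add_comm, add_zero]

lemma i_not_le_neg_i (h : (zero : A) ≠ one) : ¬ le (i : A) (neg i) := by
  intro hle
  have h2 := dia_mono hle (one : A)
  rw [i_dia, neg_dia, i_dia] at h2
  have hno : CMV.neg (one : A) = zero := by unfold one; rw [neg_neg]
  rw [hno] at h2
  exact not_one_le_zero h h2

lemma neg_i_not_le_i (h : (zero : A) ≠ one) : ¬ le (neg (i : A)) i := by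
  intro hle
  have h2 := dia_mono hle (zero : A)
  rw [neg_dia, i_dia] at h2
  exact not_one_le_zero h h2

lemma i_ne_zero_s11 (h : (zero : A) ≠ one) : (i : A) ≠ zero := by
  intro hiz
  apply h
  have := i_dia (one : A)
  rw [hiz, zero_dia] at this
  exact this

lemma neg_i_ne_zero (h : (zero : A) ≠ one) : neg (i : A) ≠ zero := by
  intro hiz
  have hi : (i : A) = one := by
    have := neg_neg (i : A)
    rw [hiz] at this
    exact this.symm
  apply h
  have := i_dia (zero : A)
  rw [hi, one_dia] at this
  exact this.symm

end CMV

/-- In a non-trivial CMV-algebra, `i ∉ Rad` and `i* ∉ Rad`; consequently the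
MV-reduct is not perfect. -/
theorem stmt11 {A : Type*} [CMV A] (h : (CMV.zero : A) ≠ CMV.one) :
    (CMV.i : A) ∉ CMV.Rad ∧ CMV.neg (CMV.i : A) ∉ CMV.Rad ∧
    ¬ (∀ x : A, x ∈ CMV.Rad ∨ CMV.neg x ∈ CMV.Rad) := by
  have hi : (CMV.i : A) ∉ CMV.Rad := by
    rintro (hz | ⟨_, hinf⟩)
    · exact CMV.i_ne_zero_s11 h hz
    · have := hinf 1
      rw [CMV.nsmul_one] at this
      exact CMV.i_not_le_neg_i h this
  have hni : CMV.neg (CMV.i : A) ∉ CMV.Rad := by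
    rintro (hz | ⟨_, hinf⟩)
    · exact CMV.neg_i_ne_zero h hz
    · have := hinf 1
      rw [CMV.nsmul_one, CMV.neg_neg] at this
      exact CMV.neg_i_not_le_i h this
  exact ⟨hi, hni, fun hall => (hall CMV.i).elim hi hni⟩
end

section
/- (Cayley theorem for CMV-algebras) Every CMV-algebra A embeds into the functional CMV-algebra A^A of all functions from A to A (with pointwise MV-operations and composition of functions) via the map sending a to the function x ↦ a ⋄ x; this map is an injective homomorphism of CMV-algebras. -/
/-- Cayley-type theorem: `a ↦ (x ↦ a ⋄ x)` is an injective CMV-homomorphism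
of `A` into the functional CMV-algebra `A^A` (pointwise MV-operations,
composition of functions, identity map). -/
theorem stmt12 {A : Type*} [CMV A] :
    let μ : A → (A → A) := fun a x => CMV.dia a x
    Function.Injective μ ∧
    (∀ a b : A, μ (CMV.add a b) = fun x => CMV.add (μ a x) (μ b x)) ∧
    (∀ a : A, μ (CMV.neg a) = fun x => CMV.neg (μ a x)) ∧
    (μ (CMV.zero : A) = fun _ => CMV.zero) ∧
    (∀ a b : A, μ (CMV.dia a b) = μ a ∘ μ b) ∧
    μ (CMV.i : A) = id := by
  intro μ
  refine ⟨?_, ?_, ?_, ?_, ?_, ?_⟩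
  · intro a b h
    have := congrFun h CMV.i
    simpa [μ, CMV.dia_i] using this
  · intro a b; funext x; exact CMV.add_dia x a b
  · intro a; funext x; exact CMV.neg_dia a x
  · funext x; exact CMV.zero_dia x
  · intro a b; funext x; exact CMV.dia_assoc a b x
  · funext x; exact CMV.i_dia x
end

section
/- For any CMV-algebra A and any y ∈ A, the map μ_y : A → A defined by μ_y(x) = x ⋄ y is an MV-endomorphism of the MV-reduct of A, and the map y ↦ μ_y is an injective monoid homomorphism from the monoid reduct of A into the monoid of MV-endomorphisms of A (with composition f ⊡ g defined by (f ⊡ g)(a) = g(f(a)) and identity as unit). -/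
/-- For each `y`, the map `μ_y : x ↦ x ⋄ y` is an MV-endomorphism, and
`y ↦ μ_y` is an injective monoid homomorphism into `E(A)` with composition
`(f ⊡ g)(a) = g (f a)` and identity as unit. -/
theorem stmt13 {A : Type*} [CMV A] :
    let μ : A → (A → A) := fun y x => CMV.dia x y
    (∀ y a b : A, μ y (CMV.add a b) = CMV.add (μ y a) (μ y b)) ∧
    (∀ y a : A, μ y (CMV.neg a) = CMV.neg (μ y a)) ∧
    (∀ y : A, μ y CMV.zero = CMV.zero) ∧
    μ (CMV.i : A) = id ∧
    (∀ y z : A, μ (CMV.dia y z) = fun a => μ z (μ y a)) ∧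
    Function.Injective μ := by
  intro μ
  refine ⟨fun y a b => CMV.add_dia y a b, fun y a => CMV.neg_dia a y,
    fun y => CMV.zero_dia y, funext fun x => CMV.dia_i x,
    fun y z => funext fun a => (CMV.dia_assoc a y z).symm,
    fun y z h => ?_⟩
  have := congrFun h CMV.i
  simpa [μ, CMV.i_dia] using this
end

section
/- The set K of all constants of a CMV-algebra A (elements a with a ⋄ x = a for all x) is closed under ⊕ and * and contains 0, hence forms an MV-subalgebra of the MV-reduct of A; moreover K is an ideal of the monoid ⟨A, ⋄, i⟩, i.e. a ∈ K and y ∈ A imply a ⋄ y ∈ K and y ⋄ a ∈ K. -/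
/-- The set of constants is an MV-subalgebra of the MV-reduct and an ideal of
the monoid. -/
theorem stmt15 {A : Type*} [CMV A] :
    let K : Set A := {a | ∀ x : A, CMV.dia a x = a}
    (CMV.zero : A) ∈ K ∧
    (∀ a ∈ K, ∀ b ∈ K, CMV.add a b ∈ K) ∧
    (∀ a ∈ K, CMV.neg a ∈ K) ∧
    (∀ a ∈ K, ∀ y : A, CMV.dia a y ∈ K ∧ CMV.dia y a ∈ K) := by
  intro K
  refine ⟨fun x => CMV.zero_dia x, fun a ha b hb x => ?_, fun a ha x => ?_, fun a ha y => ⟨fun x => ?_, fun x => ?_⟩⟩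
  · rw [CMV.add_dia, ha x, hb x]
  · rw [CMV.neg_dia, ha x]
  · rw [ha y, ha x]
  · rw [CMV.dia_assoc, ha x]
end

section
/- Let A be a CMV-algebra and I ⊆ A. Then I is a CMV-ideal if and only if the relation ∼_I (defined by x ∼_I y iff (x ⊙ y*) ⊕ (y ⊙ x*) ∈ I) is a congruence of the CMV-algebra, i.e., a congruence of the MV-reduct that is also compatible with ⋄ on both sides. -/
namespace CMV
variable {A : Type*} [CMV A]

/-- The relation `x ∼_I y` iff `(x ⊙ y*) ⊕ (y ⊙ x*) ∈ I`. -/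
def relI (I : Set A) (x y : A) : Prop :=
  add (mul x (neg y)) (mul y (neg x)) ∈ I

/-- A CMV-ideal: an MV-ideal which is a right ideal of the monoid and whose
induced relation is compatible with `⋄` on the left. -/
def CMVIdeal (I : Set A) : Prop :=
  I.Nonempty ∧ (∀ x ∈ I, ∀ y : A, le y x → y ∈ I) ∧
  (∀ x ∈ I, ∀ y ∈ I, add x y ∈ I) ∧
  (∀ x ∈ I, ∀ y : A, dia x y ∈ I) ∧
  (∀ a x y : A, relI I x y → relI I (dia a x) (dia a y))

/-- A CMV-congruence: an equivalence relation compatible with `⊕`, `*` and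
with `⋄` in both arguments. -/
def IsCMVCongruence (r : A → A → Prop) : Prop :=
  Equivalence r ∧
  (∀ x y x' y' : A, r x y → r x' y' → r (add x x') (add y y')) ∧
  (∀ x y : A, r x y → r (neg x) (neg y)) ∧
  (∀ x y x' y' : A, r x y → r x' y' → r (dia x x') (dia y y'))

end CMV

namespace CMV
variable {A : Type*} [CMV A]

lemma zero_add' (x : A) : add zero x = x := by rw [add_comm, add_zero]

lemma neg_zero' : (neg zero : A) = one := rfl

lemma add_one' (x : A) : add x one = one := add_top x

lemma one_add' (x : A) : add one x = one := by rw [add_comm]; exact add_top x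

lemma neg_one' : (neg one : A) = zero := neg_neg zero

lemma neg_add_self' (y : A) : add (neg y) y = one := by
  have h := luk (one : A) y
  rw [neg_one', zero_add', add_one'] at h
  exact h

lemma mul_one' (x : A) : mul x one = x := by rw [mul, neg_one', add_zero, neg_neg]

lemma mul_comm' (x y : A) : mul x y = mul y x := by rw [mul, mul, add_comm]

lemma mul_neg_self' (x : A) : mul x (neg x) = zero := by
  rw [mul, neg_neg, neg_add_self', neg_one']

lemma zero_mul' (x : A) : mul zero x = zero := by
  rw [mul, neg_zero', one_add', neg_one']

lemma le_iff_mul' {x y : A} : le x y ↔ mul x (neg y) = zero := by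
  rw [le, mul, neg_neg]
  constructor
  · intro h; rw [h, neg_one']
  · intro h
    have h2 := congrArg neg h
    rw [neg_neg] at h2
    exact h2

lemma luk'' (x y : A) : add (mul x (neg y)) y = add (mul y (neg x)) x := by
  rw [mul, mul, neg_neg, neg_neg]; exact luk x y

lemma le_add_left' (x u : A) : le x (add u x) := by
  rw [le, add_comm u x, ← add_assoc, neg_add_self', one_add']

lemma le_add_right' (x u : A) : le x (add x u) := by
  rw [add_comm]; exact le_add_left' x u

lemma le_or' (x y : A) : le x (add (mul x (neg y)) y) := by
  rw [luk'']; exact le_add_left' x (mul y (neg x))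

lemma eq_of_le' {a b : A} (h : le a b) : b = add (mul b (neg a)) a := by
  have h2 := luk'' b a
  rw [le_iff_mul'.mp h, zero_add'] at h2
  exact h2.symm

lemma le_trans' {a b c : A} (h1 : le a b) (h2 : le b c) : le a c := by
  rw [le, eq_of_le' h2, add_comm (mul c (neg b)) b, ← add_assoc, h1, one_add']

lemma add_le_add_right' {a b : A} (h : le a b) (c : A) : le (add a c) (add b c) := by
  rw [eq_of_le' h, add_assoc]
  exact le_add_left' (add a c) (mul b (neg a))

lemma add_le_add_left' {a b : A} (h : le a b) (c : A) : le (add c a) (add c b) := by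
  rw [add_comm c a, add_comm c b]; exact add_le_add_right' h c

lemma add_le_add' {a b c d : A} (h1 : le a b) (h2 : le c d) :
    le (add a c) (add b d) :=
  le_trans' (add_le_add_right' h1 c) (add_le_add_left' h2 b)

lemma le_neg' {a b : A} (h : le a b) : le (neg b) (neg a) := by
  rw [le, neg_neg, add_comm]; exact h

lemma mul_assoc' (x y z : A) : mul (mul x y) z = mul x (mul y z) := by
  simp only [mul, neg_neg]
  rw [add_assoc]

lemma residuation' {a b c : A} : le (mul a b) c ↔ le a (add (neg b) c) := by
  rw [le_iff_mul', le_iff_mul']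
  have h : neg (add (neg b) c) = mul b (neg c) := by rw [mul, neg_neg]
  rw [h, ← mul_assoc']

lemma key1 (x y z : A) :
    le (mul x (neg z)) (add (mul x (neg y)) (mul y (neg z))) := by
  rw [residuation', neg_neg]
  have h1 : le x (add (mul x (neg y)) y) := le_or' x y
  have h2 : le (add (mul x (neg y)) y)
      (add (mul x (neg y)) (add (mul y (neg z)) z)) :=
    add_le_add_left' (le_or' y z) _
  have h3 : add (mul x (neg y)) (add (mul y (neg z)) z)
      = add z (add (mul x (neg y)) (mul y (neg z))) := by
    rw [← add_assoc, add_comm]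
  rw [← h3]
  exact le_trans' h1 h2

lemma key2 (x y a : A) :
    le (mul (add x a) (neg (add y a))) (mul x (neg y)) := by
  rw [residuation', neg_neg]
  have h1 : le (add x a) (add (add (mul x (neg y)) y) a) :=
    add_le_add_right' (le_or' x y) a
  have h2 : add (add (mul x (neg y)) y) a = add (add y a) (mul x (neg y)) := by
    rw [add_comm (mul x (neg y)) y, add_assoc, add_comm (mul x (neg y)) a,
      ← add_assoc]
  rw [← h2]
  exact h1

lemma mul_dia' (x y a : A) : mul (dia x a) (dia y a) = dia (mul x y) a := by
  rw [mul, mul, ← neg_dia, ← neg_dia, ← add_dia, ← neg_dia]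

lemma d_dia' (x y a : A) :
    add (mul (dia x a) (neg (dia y a))) (mul (dia y a) (neg (dia x a)))
      = dia (add (mul x (neg y)) (mul y (neg x))) a := by
  rw [← neg_dia, ← neg_dia, mul_dia', mul_dia', ← add_dia]

end CMV

open CMV in
/-- `I` is a CMV-ideal iff `∼_I` is a CMV-congruence. -/
theorem stmt17 {A : Type*} [CMV A] (I : Set A) :
    CMV.CMVIdeal I ↔ CMV.IsCMVCongruence (CMV.relI I) := by
  constructor
  · rintro ⟨⟨a, ha⟩, hdown, haddI, hdiaI, hleft⟩
    have h0 : (zero : A) ∈ I := by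
      refine hdown a ha zero ?_
      rw [le, neg_zero', one_add']
    have hrefl : ∀ x : A, relI I x x := by
      intro x
      show add (mul x (neg x)) (mul x (neg x)) ∈ I
      rw [mul_neg_self', CMV.add_zero]
      exact h0
    have hsymm : ∀ {x y : A}, relI I x y → relI I y x := by
      intro x y h
      show add (mul y (neg x)) (mul x (neg y)) ∈ I
      rw [CMV.add_comm]
      exact h
    have memd : ∀ {x y : A}, relI I x y → mul x (neg y) ∈ I := by
      intro x y h
      exact hdown _ h _ (le_add_right' _ _)
    have htrans : ∀ {x y z : A}, relI I x y → relI I y z → relI I x z := by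
      intro x y z hxy hyz
      have hS : add (add (mul x (neg y)) (mul y (neg z)))
          (add (mul z (neg y)) (mul y (neg x))) ∈ I :=
        haddI _ (haddI _ (memd hxy) _ (memd hyz)) _
          (haddI _ (memd (hsymm hyz)) _ (memd (hsymm hxy)))
      exact hdown _ hS _ (add_le_add' (key1 x y z) (key1 z y x))
    have addr : ∀ {x y : A} (a : A), relI I x y → relI I (add x a) (add y a) := by
      intro x y a h
      exact hdown _ h _ (add_le_add' (key2 x y a) (key2 y x a))
    have addl : ∀ {x' y' : A} (a : A), relI I x' y' → relI I (add a x') (add a y') := by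
      intro x' y' a h
      rw [CMV.add_comm a x', CMV.add_comm a y']
      exact addr a h
    have diar : ∀ {x y : A} (a : A), relI I x y → relI I (dia x a) (dia y a) := by
      intro x y a h
      show add (mul (dia x a) (neg (dia y a))) (mul (dia y a) (neg (dia x a))) ∈ I
      rw [d_dia']
      exact hdiaI _ h a
    refine ⟨⟨hrefl, fun h => hsymm h, fun h h' => htrans h h'⟩, ?_, ?_, ?_⟩
    · exact fun x y x' y' h h' => htrans (addr x' h) (addl y h')
    · intro x y h
      show add (mul (neg x) (neg (neg y))) (mul (neg y) (neg (neg x))) ∈ I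
      rw [CMV.neg_neg, CMV.neg_neg, mul_comm' (neg x) y, mul_comm' (neg y) x, CMV.add_comm]
      exact h
    · exact fun x y x' y' h h' => htrans (diar x' h) (hleft y x' y' h')
  · rintro ⟨heq, haddc, hnegc, hdiac⟩
    have dzero : ∀ z : A, add (mul z (neg zero)) (mul zero (neg z)) = z := by
      intro z
      rw [neg_zero', mul_one', zero_mul', CMV.add_zero]
    have memiff : ∀ z : A, z ∈ I ↔ relI I z zero := by
      intro z
      show z ∈ I ↔ add (mul z (neg zero)) (mul zero (neg z)) ∈ I
      rw [dzero]
    have h0 : (zero : A) ∈ I := (memiff zero).mpr (heq.refl zero)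
    refine ⟨⟨zero, h0⟩, ?_, ?_, ?_, ?_⟩
    · intro x hx y hyx
      have hx0 : relI I x zero := (memiff x).mp hx
      have h1 : relI I (add (neg y) x) (add (neg y) zero) :=
        haddc _ _ _ _ (heq.refl (neg y)) hx0
      rw [CMV.add_zero] at h1
      have h2 := hnegc _ _ h1
      rw [show add (neg y) x = one from hyx, neg_one', CMV.neg_neg] at h2
      exact (memiff y).mpr (heq.symm h2)
    · intro x hx y hy
      have h := haddc _ _ _ _ ((memiff x).mp hx) ((memiff y).mp hy)
      rw [CMV.add_zero] at h
      exact (memiff _).mpr h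
    · intro x hx y
      have h := hdiac _ _ _ _ ((memiff x).mp hx) (heq.refl y)
      rw [CMV.zero_dia] at h
      exact (memiff _).mpr h
    · intro a x y h
      exact hdiac _ _ _ _ (heq.refl a) h
end

section
/- For any MV-algebra M, the functional CMV-algebra A = M^M (all functions M → M with pointwise MV-operations and composition) is simple: its only CMV-ideals are {0} and A itself. -/
class MV (M : Type*) where
  add : M → M → M
  neg : M → M
  zero : M
  add_assoc : ∀ x y z : M, add (add x y) z = add x (add y z)
  add_comm : ∀ x y : M, add x y = add y x
  add_zero : ∀ x : M, add x zero = x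
  neg_neg : ∀ x : M, neg (neg x) = x
  add_top : ∀ x : M, add x (neg zero) = neg zero
  luk : ∀ x y : M, add (neg (add (neg x) y)) y = add (neg (add (neg y) x)) x

namespace MV
variable {M : Type*} [MV M]

/-- The top element `1 := 0*`. -/
def one : M := neg zero

/-- The MV-order: `x ≤ y` iff `x* ⊕ y = 1`. -/
def le (x y : M) : Prop := add (neg x) y = one

/-- `x ⊙ y = (x* ⊕ y*)*`. -/
def mul (x y : M) : M := neg (add (neg x) (neg y))

/-- Pointwise sum on `M → M`. -/
def fadd (f g : M → M) : M → M := fun x => add (f x) (g x)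

/-- Pointwise negation on `M → M`. -/
def fneg (f : M → M) : M → M := fun x => neg (f x)

/-- The zero function. -/
def fzero : M → M := fun _ => zero

/-- Pointwise order on `M → M`. -/
def fle (f g : M → M) : Prop := ∀ x : M, le (f x) (g x)

/-- The Chang distance `d(f,g) = (f ⊙ g*) ⊕ (g ⊙ f*)`, pointwise. -/
def fd (f g : M → M) : M → M := fun x => add (mul (f x) (neg (g x))) (mul (g x) (neg (f x)))

end MV

namespace MV
variable {M : Type*} [MV M]

/-- `I` is a CMV-ideal of the full functional CMV-algebra `M^M`. -/
def CMVIdealFun (I : Set (M → M)) : Prop :=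
  I.Nonempty ∧
  (∀ f ∈ I, ∀ g : M → M, fle g f → g ∈ I) ∧
  (∀ f ∈ I, ∀ g ∈ I, fadd f g ∈ I) ∧
  (∀ f ∈ I, ∀ g : M → M, f ∘ g ∈ I) ∧
  (∀ h f g : M → M, fd f g ∈ I → fd (h ∘ f) (h ∘ g) ∈ I)

end MV

namespace MV
variable {M : Type*} [MV M]

lemma zero_le' (x : M) : le zero x := by
  unfold le; rw [add_comm]; exact add_top x

lemma le_one' (x : M) : le x one := add_top _

lemma mul_top' (x : M) : mul x (neg zero) = x := by
  unfold mul; rw [neg_neg, add_zero, neg_neg]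

lemma zero_mul' (y : M) : mul zero y = zero := by
  unfold mul; rw [add_comm, add_top, neg_neg]

lemma fd_const_zero (v : M) : fd (fun _ => v : M → M) fzero = fun _ => v := by
  funext x
  show add (mul v (neg zero)) (mul zero (neg v)) = v
  rw [mul_top', zero_mul', add_zero]

end MV

/-- The functional CMV-algebra `M^M` is simple: its only CMV-ideals are
`{0}` and the whole algebra. -/
theorem stmt19 {M : Type*} [MV M] (I : Set (M → M)) (hI : MV.CMVIdealFun I) :
    I = {MV.fzero} ∨ I = Set.univ := by
  classical
  obtain ⟨⟨f0, hf0⟩, hdown, hadd, hrc, hlc⟩ := hI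
  have hz : MV.fzero ∈ I := hdown f0 hf0 _ (fun x => MV.zero_le' _)
  by_cases htriv : ∀ f ∈ I, f = MV.fzero
  · left
    ext f
    simp only [Set.mem_singleton_iff]
    exact ⟨htriv f, fun h => h ▸ hz⟩
  · right
    push_neg at htriv
    obtain ⟨f, hf, hfne⟩ := htriv
    obtain ⟨a, ha⟩ : ∃ a, f a ≠ MV.zero := by
      by_contra h; push_neg at h; exact hfne (funext h)
    set c := f a with hc
    have hcI : (fun _ => c : M → M) ∈ I := hrc f hf (fun _ => a)
    have hfd : MV.fd (fun _ => c : M → M) MV.fzero ∈ I := by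
      rw [MV.fd_const_zero]; exact hcI
    set h : M → M := fun x => if x = MV.zero then MV.zero else MV.one with hh
    have h1 := hlc h _ _ hfd
    have hcomp1 : h ∘ (fun _ => c : M → M) = fun _ => MV.one := by
      funext x; simp [hh, ha]
    have hcomp2 : h ∘ (MV.fzero : M → M) = MV.fzero := by
      funext x; simp [hh, MV.fzero]
    rw [hcomp1, hcomp2, MV.fd_const_zero] at h1
    ext g
    simp only [Set.mem_univ, iff_true]
    exact hdown _ h1 g (fun x => MV.le_one' _)
end
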